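/- arXiv:1405.6544 — 4 statements merged into one kernel-verified Lean document; each statement's English description precedes it below -/
import Mathlib

section
/- Let Y⁰ = Σ_{k=1}^K c_k a(f_k) φ_k with distinct frequencies f_k ∈ [0,1), c_k > 0, and unit-norm row vectors φ_k ∈ ℂ^{1×L}. If 2K < spark(A¹_Ω) − 1 + rank(Y⁰_Ω), then Y⁰ is the unique minimizer of min_Y ‖Y‖_{A,0} subject to Y_Ω = Y⁰_Ω, and moreover K = ‖Y⁰‖_{A,0} and the atomic decomposition of Y⁰ into K atoms is unique. -/
open Complex Matrix Finset

/-- The atom `a(f) = (1, e^{i2πf}, …, e^{i2π(N-1)f})` as a vector in `ℂ^N`. -/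
noncomputable def atom (N : ℕ) (f : ℝ) : Fin N → ℂ :=
  fun j => Complex.exp (2 * Real.pi * Complex.I * ((j : ℕ) : ℂ) * (f : ℂ))

/-- Restriction of the atom to the index set `Ω`. -/
noncomputable def atomRes (N : ℕ) (Ω : Finset (Fin N)) (f : ℝ) : Ω → ℂ :=
  fun m => atom N f (m : Fin N)

/-- Spark of the continuous dictionary `A¹_Ω`: the smallest number of distinct atoms
`a_Ω(f)` with `f ∈ [0,1)` that are linearly dependent. -/
noncomputable def spark (N : ℕ) (Ω : Finset (Fin N)) : ℕ :=
  sInf {k | ∃ S : Finset ℝ, S.card = k ∧ (↑S : Set ℝ) ⊆ Set.Ico (0 : ℝ) 1 ∧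
    ¬ LinearIndependent ℂ (fun f : S => atomRes N Ω (f : ℝ))}

/-- The atomic `ℓ₀` norm of `Y ∈ ℂ^{N×L}`: the smallest number of atoms `a(f)φ`
(with `f ∈ [0,1)`, `‖φ‖₂ = 1` and positive coefficients) summing to `Y`. -/
noncomputable def AL0 (N L : ℕ) (Y : Matrix (Fin N) (Fin L) ℂ) : ℕ :=
  sInf {K | ∃ (c : Fin K → ℝ) (f : Fin K → ℝ) (φ : Fin K → Fin L → ℂ),
    (∀ k, 0 < c k) ∧ (∀ k, f k ∈ Set.Ico (0 : ℝ) 1) ∧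
    (∀ k, ∑ l, Complex.normSq (φ k l) = 1) ∧
    (∀ j l, Y j l = ∑ k, (c k : ℂ) * atom N (f k) j * φ k l)}

/-- The rows of `Y` indexed by `Ω`. -/
def rowsRes {N L : ℕ} (Ω : Finset (Fin N)) (Y : Matrix (Fin N) (Fin L) ℂ) :
    Matrix Ω (Fin L) ℂ := fun m l => Y (m : Fin N) l

/-!
Write a decomposition `Y = ∑ₖ a(fₖ) wₖ` with `wₖ = cₖ φₖ` and merge the atoms of equal frequency.
If a second decomposition with frequency set `F'`, `|F'| ≤ K`, agrees with `Y⁰` on `Ω`, then on the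
union `T = F ∪ F'` the restricted atom matrix `A_Ω` annihilates the difference `D` of the merged
coefficient rows. If the restricted atoms over `T` were dependent, some `rank A_Ω + 1` of them
would be, so `spark ≤ rank A_Ω + 1 ≤ |T| - rank D + 1`; and `rank Y⁰_Ω ≤ |F ∩ F'| + rank D`,
since outside `F ∩ F'` each merged row of the second decomposition is `0` or a row of `-D`.
Adding up, `spark + rank Y⁰_Ω ≤ |F| + |F'| + 1 ≤ 2K + 1`, against the hypothesis. Hence the
atoms over `T` are independent, `D = 0`, and all three claims follow. Every `Y` has some atomic
decomposition, because the atoms `a(n/N)`, `n < N`, form a basis of `ℂᴺ` (a Vandermonde matrix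
at the `N`-th roots of unity).
-/

section LinearAlgebra

variable {𝕜 ι m n : Type*} [Field 𝕜]

theorem exists_subset_card_eq_finrank_succ_not_linearIndependent {M : Type*} [AddCommGroup M]
    [Module 𝕜 M] {v : ι → M} {T : Finset ι} (h : ¬ LinearIndependent 𝕜 (fun t : T => v t)) :
    ∃ S ⊆ T, S.card = Set.finrank 𝕜 (v '' T) + 1 ∧ ¬ LinearIndependent 𝕜 (fun t : S => v t) := by
  have hlt : Set.finrank 𝕜 (v '' T) < T.card := by
    rw [Set.image_eq_range]
    rw [linearIndependent_iff_card_eq_finrank_span, Fintype.card_coe] at h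
    exact lt_of_le_of_ne (by simpa using finrank_range_le_card (R := 𝕜) (fun t : T => v t))
      (Ne.symm h)
  obtain ⟨S, hST, hS⟩ := exists_subset_card_eq hlt
  refine ⟨S, hST, hS, fun hli => ?_⟩
  rw [linearIndependent_iff_card_eq_finrank_span, Fintype.card_coe] at hli
  have : Module.Finite 𝕜 (Submodule.span 𝕜 (v '' T)) :=
    Module.Finite.span_of_finite 𝕜 (T.finite_toSet.image v)
  have : Set.finrank 𝕜 (Set.range fun t : S => v t) ≤ Set.finrank 𝕜 (v '' T) :=
    Submodule.finrank_mono <| Submodule.span_mono <| by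
      rintro _ ⟨t, rfl⟩
      exact ⟨t, hST t.2, rfl⟩
  omega

theorem Matrix.rank_le_card_add_rank [Fintype n] [Finite m] {B D : Matrix m n 𝕜} (C : Finset m)
    (h : ∀ i ∉ C, B i ∈ Submodule.span 𝕜 (Set.range D)) : B.rank ≤ C.card + D.rank := by
  classical
  rw [rank_eq_finrank_span_row, rank_eq_finrank_span_row]
  have hle : Submodule.span 𝕜 (Set.range B.row) ≤
      Submodule.span 𝕜 (B.row '' C) ⊔ Submodule.span 𝕜 (Set.range D.row) := by
    rw [Submodule.span_le]
    rintro _ ⟨i, rfl⟩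
    by_cases hi : i ∈ C
    · exact Submodule.mem_sup_left (Submodule.subset_span ⟨i, hi, rfl⟩)
    · exact Submodule.mem_sup_right (h i hi)
  calc Module.finrank 𝕜 (Submodule.span 𝕜 (Set.range B.row))
      ≤ Module.finrank 𝕜 ↥(Submodule.span 𝕜 (B.row '' C) ⊔ Submodule.span 𝕜 (Set.range D.row)) :=
        Submodule.finrank_mono hle
    _ ≤ _ := Submodule.finrank_add_le_finrank_add_finrank _ _
    _ ≤ C.card + _ := by
        gcongr
        rw [← coe_image]
        exact (finrank_span_finset_le_card _).trans card_image_le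

theorem Matrix.vecMulVec_sum {α : Type*} [NonUnitalNonAssocSemiring α] (w : m → α) (s : Finset ι)
    (v : ι → n → α) : vecMulVec w (∑ i ∈ s, v i) = ∑ i ∈ s, vecMulVec w (v i) := by
  ext i j
  simp only [vecMulVec_apply, sum_apply, Finset.sum_apply, mul_sum]

theorem Matrix.sum_vecMulVec_eq_mul {α : Type*} [NonUnitalNonAssocSemiring α] (T : Finset ι)
    (v : ι → m → α) (x : ι → n → α) :
    ∑ t ∈ T, vecMulVec (v t) (x t) = (of fun i (t : T) => v t i) * of fun (t : T) => x t := by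
  ext i l
  simp only [sum_apply, vecMulVec_apply, mul_apply, of_apply]
  exact (sum_coe_sort T fun t => v t i * x t l).symm

theorem eq_of_sum_vecMulVec_eq [DecidableEq ι] [Finite m] [Fintype n] {v : ι → m → 𝕜}
    {u u' : ι → n → 𝕜} {F F' : Finset ι} {s : ℕ}
    (hu : ∀ t ∉ F, u t = 0) (hu' : ∀ t ∉ F', u' t = 0)
    (hs : ∀ S ⊆ F ∪ F', ¬ LinearIndependent 𝕜 (fun t : S => v t) → s ≤ S.card)
    (heq : ∑ t ∈ F ∪ F', vecMulVec (v t) (u t) = ∑ t ∈ F ∪ F', vecMulVec (v t) (u' t))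
    (hrank : F.card + F'.card + 1 < s + (∑ t ∈ F ∪ F', vecMulVec (v t) (u t)).rank) :
    u = u' := by
  set T := F ∪ F'
  rw [sum_vecMulVec_eq_mul, sum_vecMulVec_eq_mul] at heq
  rw [sum_vecMulVec_eq_mul, heq] at hrank
  set A : Matrix m T 𝕜 := of fun i t => v t i
  set U : Matrix T n 𝕜 := of fun t => u t
  set U' : Matrix T n 𝕜 := of fun t => u' t
  have hAD : A * (U - U') = 0 := by rw [Matrix.mul_sub, heq, sub_self]
  have hli : LinearIndependent 𝕜 (fun t : T => v t) := by
    by_contra hdep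
    obtain ⟨S, hST, hS, hSdep⟩ := exists_subset_card_eq_finrank_succ_not_linearIndependent hdep
    have hA : A.rank = Set.finrank 𝕜 (v '' T) := by
      rw [rank_eq_finrank_span_cols, Set.image_eq_range]
      rfl
    have hU' : ∀ t ∉ (F ∩ F').subtype (· ∈ T), U' t ∈ Submodule.span 𝕜 (Set.range (U - U')) := by
      intro t ht
      rw [mem_subtype, mem_inter, not_and_or] at ht
      rcases ht with ht | ht
      · have : U' t = -(U - U') t := by
          change u' t = -(u t - u' t)
          rw [hu t ht, zero_sub, neg_neg]
        rw [this]
        exact Submodule.neg_mem _ (Submodule.subset_span ⟨t, rfl⟩)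
      · rw [show U' t = 0 from hu' t ht]
        exact Submodule.zero_mem _
    have hrankY := (rank_mul_le_right A U').trans (rank_le_card_add_rank _ hU')
    have hAD' := rank_add_rank_le_card_of_mul_eq_zero hAD
    have hcard : #T + #(F ∩ F') = #F + #F' := card_union_add_card_inter F F'
    rw [card_subtype, filter_true_of_mem fun t ht => mem_union_left _ (mem_inter.1 ht).1] at hrankY
    rw [Fintype.card_coe] at hAD'
    have := hs S hST hSdep
    omega
  funext t
  by_cases ht : t ∈ T
  · funext l
    have hcol : ∑ t' : T, (U - U') t' l • v t' = 0 := by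
      ext i
      simpa [A, mul_apply, Finset.sum_apply, mul_comm] using congr_fun (congr_fun hAD i) l
    exact sub_eq_zero.1 (Fintype.linearIndependent_iff.1 hli _ hcol ⟨t, ht⟩)
  · rw [hu t (fun h => ht (mem_union_left _ h)), hu' t (fun h => ht (mem_union_right _ h))]

end LinearAlgebra

section FiberSum

variable {ι κ m n M : Type*} [Fintype κ] [DecidableEq ι] [AddCommMonoid M] {f : κ → ι}

def fiberSum (f : κ → ι) (w : κ → M) (t : ι) : M :=
  ∑ k with f k = t, w k

theorem fiberSum_eq_zero {w : κ → M} {t : ι} (ht : t ∉ Set.range f) : fiberSum f w t = 0 :=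
  sum_eq_zero fun k hk => absurd ⟨k, (mem_filter.1 hk).2⟩ ht

theorem fiberSum_apply_of_injective (hf : Function.Injective f) (w : κ → M) (k : κ) :
    fiberSum f w (f k) = w k :=
  sum_eq_single_of_mem k (by simp) fun _ hj hne => absurd (hf (mem_filter.1 hj).2) hne

theorem sum_vecMulVec_fiberSum {α : Type*} [NonUnitalNonAssocSemiring α] {T : Finset ι}
    (hT : ∀ k, f k ∈ T) (v : ι → m → α) (w : κ → n → α) :
    ∑ t ∈ T, vecMulVec (v t) (fiberSum f w t) = ∑ k, vecMulVec (v (f k)) (w k) := by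
  simp_rw [fiberSum, vecMulVec_sum]
  rw [← sum_fiberwise_of_maps_to fun k _ => hT k]
  refine sum_congr rfl fun t _ => sum_congr rfl fun k hk => ?_
  rw [(mem_filter.1 hk).2]

end FiberSum

section Atoms

theorem Fin.cast_div_mem_Ico {N : ℕ} (n : Fin N) : (n / N : ℝ) ∈ Set.Ico (0 : ℝ) 1 :=
  ⟨by positivity, (div_lt_one (by exact_mod_cast n.pos)).2 (by exact_mod_cast n.2)⟩

theorem linearIndependent_atom_div (N : ℕ) :
    LinearIndependent ℂ (fun n : Fin N => atom N (n / N)) := by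
  rcases Nat.eq_zero_or_pos N with rfl | hN
  · exact linearIndependent_empty_type
  have hζ := Complex.isPrimitiveRoot_exp N hN.ne'
  have hrow : (fun n : Fin N => atom N (n / N)) =
      vandermonde fun n : Fin N => Complex.exp (2 * Real.pi * Complex.I / N) ^ (n : ℕ) := by
    ext n j
    rw [vandermonde_apply, ← pow_mul, ← Complex.exp_nat_mul, atom]
    push_cast
    ring_nf
  rw [hrow]
  refine linearIndependent_rows_of_det_ne_zero (det_vandermonde_ne_zero_iff.2 fun a b hab => ?_)
  exact Fin.ext (hζ.pow_inj a.2 b.2 hab)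

theorem exists_eq_sum_vecMulVec_atom_div {N L : ℕ} (Y : Matrix (Fin N) (Fin L) ℂ) :
    ∃ ψ : Fin N → Fin L → ℂ, Y = ∑ n : Fin N, vecMulVec (atom N (n / N)) (ψ n) := by
  have hspan := (linearIndependent_atom_div N).span_eq_top_of_card_eq_finrank' (by simp)
  have hcol : ∀ l, ∃ g : Fin N → ℂ, ∑ n, g n • atom N (n / N) = fun j => Y j l := fun l =>
    (Submodule.mem_span_range_iff_exists_fun ℂ).1 (hspan ▸ Submodule.mem_top)
  choose g hg using hcol
  refine ⟨fun n l => g l n, ?_⟩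
  ext j l
  simpa [Matrix.sum_apply, vecMulVec_apply, mul_comm] using (congr_fun (hg l) j).symm

end Atoms

theorem exists_pos_sum_normSq_inv_mul_eq_one {ι : Type*} [Fintype ι] {ψ : ι → ℂ} (hψ : ψ ≠ 0) :
    ∃ r : ℝ, 0 < r ∧ ∑ i, normSq ((r : ℂ)⁻¹ * ψ i) = 1 := by
  have hpos : 0 < ∑ i, normSq (ψ i) := by
    obtain ⟨i, hi⟩ := Function.ne_iff.1 hψ
    exact sum_pos' (fun i _ => normSq_nonneg _) ⟨i, mem_univ _, normSq_pos.2 hi⟩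
  refine ⟨√(∑ i, normSq (ψ i)), Real.sqrt_pos.2 hpos, ?_⟩
  simp_rw [normSq_mul, normSq_inv, normSq_ofReal, ← mul_sum, Real.mul_self_sqrt hpos.le,
    inv_mul_cancel₀ hpos.ne']

section AtomicDecomp

variable {N L K : ℕ}

def IsAtomicDecomp (Y : Matrix (Fin N) (Fin L) ℂ) (c : Fin K → ℝ) (f : Fin K → ℝ)
    (φ : Fin K → Fin L → ℂ) : Prop :=
  (∀ k, 0 < c k) ∧ (∀ k, f k ∈ Set.Ico (0 : ℝ) 1) ∧ (∀ k, ∑ l, Complex.normSq (φ k l) = 1) ∧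
    ∀ j l, Y j l = ∑ k, (c k : ℂ) * atom N (f k) j * φ k l

theorem AL0_le {Y : Matrix (Fin N) (Fin L) ℂ} {c f : Fin K → ℝ} {φ : Fin K → Fin L → ℂ}
    (h : IsAtomicDecomp Y c f φ) : AL0 N L Y ≤ K :=
  Nat.sInf_le ⟨c, f, φ, h⟩

theorem isAtomicDecomp_zero :
    IsAtomicDecomp (0 : Matrix (Fin N) (Fin L) ℂ) finZeroElim finZeroElim finZeroElim :=
  ⟨finZeroElim, finZeroElim, finZeroElim, fun _ _ => by simp⟩

theorem IsAtomicDecomp.append {K' : ℕ} {Y Y' : Matrix (Fin N) (Fin L) ℂ} {c f : Fin K → ℝ}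
    {φ : Fin K → Fin L → ℂ} {c' f' : Fin K' → ℝ} {φ' : Fin K' → Fin L → ℂ}
    (h : IsAtomicDecomp Y c f φ) (h' : IsAtomicDecomp Y' c' f' φ') :
    IsAtomicDecomp (Y + Y') (Fin.append c c') (Fin.append f f') (Fin.append φ φ') := by
  obtain ⟨hc, hf, hφ, hY⟩ := h
  obtain ⟨hc', hf', hφ', hY'⟩ := h'
  refine ⟨Fin.addCases (by simpa using hc) (by simpa using hc'),
    Fin.addCases (by simpa using hf) (by simpa using hf'),
    Fin.addCases (by simpa using hφ) (by simpa using hφ'), fun j l => ?_⟩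
  simp [Fin.sum_univ_add, hY, hY']

theorem exists_isAtomicDecomp_vecMulVec_atom {f : ℝ} (hf : f ∈ Set.Ico (0 : ℝ) 1)
    (ψ : Fin L → ℂ) : ∃ (K : ℕ) (c f' : Fin K → ℝ) (φ : Fin K → Fin L → ℂ),
      IsAtomicDecomp (vecMulVec (atom N f) ψ) c f' φ := by
  rcases eq_or_ne ψ 0 with rfl | hψ
  · rw [show vecMulVec (atom N f) (0 : Fin L → ℂ) = 0 by ext; simp [vecMulVec_apply]]
    exact ⟨0, _, _, _, isAtomicDecomp_zero⟩
  obtain ⟨r, hr, hφ⟩ := exists_pos_sum_normSq_inv_mul_eq_one hψ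
  refine ⟨1, ![r], ![f], ![fun l => (r : ℂ)⁻¹ * ψ l], fun _ => by simpa using hr,
    fun _ => by simpa using hf, fun _ => by simpa using hφ, fun j l => ?_⟩
  have : (r : ℂ) ≠ 0 := by exact_mod_cast hr.ne'
  simp [vecMulVec_apply]
  field_simp

theorem exists_isAtomicDecomp (Y : Matrix (Fin N) (Fin L) ℂ) :
    ∃ (K : ℕ) (c f : Fin K → ℝ) (φ : Fin K → Fin L → ℂ), IsAtomicDecomp Y c f φ := by
  obtain ⟨ψ, rfl⟩ := exists_eq_sum_vecMulVec_atom_div Y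
  refine sum_induction _ (fun Y => ∃ (K : ℕ) (c f : Fin K → ℝ) (φ : Fin K → Fin L → ℂ),
    IsAtomicDecomp Y c f φ) ?_ ⟨0, _, _, _, isAtomicDecomp_zero⟩
      fun n _ => exists_isAtomicDecomp_vecMulVec_atom (Fin.cast_div_mem_Ico n) (ψ n)
  rintro _ _ ⟨_, _, _, _, h⟩ ⟨_, _, _, _, h'⟩
  exact ⟨_, _, _, _, h.append h'⟩

theorem exists_isAtomicDecomp_AL0 (Y : Matrix (Fin N) (Fin L) ℂ) :
    ∃ (c f : Fin (AL0 N L Y) → ℝ) (φ : Fin (AL0 N L Y) → Fin L → ℂ), IsAtomicDecomp Y c f φ :=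
  Nat.sInf_mem (exists_isAtomicDecomp Y)

end AtomicDecomp

theorem spark_le {N : ℕ} {Ω : Finset (Fin N)} {S : Finset ℝ} (hS : (S : Set ℝ) ⊆ Set.Ico 0 1)
    (hdep : ¬ LinearIndependent ℂ (fun f : S => atomRes N Ω f)) : spark N Ω ≤ S.card :=
  Nat.sInf_le ⟨S, rfl, hS, hdep⟩

section Recovery

variable {N L K K' : ℕ} {Ω : Finset (Fin N)} {Y Y0 : Matrix (Fin N) (Fin L) ℂ}
  {c f : Fin K → ℝ} {φ : Fin K → Fin L → ℂ} {c' f' : Fin K' → ℝ} {φ' : Fin K' → Fin L → ℂ}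

theorem IsAtomicDecomp.eq_sum (h : IsAtomicDecomp Y c f φ) :
    Y = ∑ k, vecMulVec (atom N (f k)) ((c k : ℂ) • φ k) := by
  ext j l
  simp [h.2.2.2, Matrix.sum_apply, vecMulVec_apply, mul_assoc, mul_left_comm]

theorem IsAtomicDecomp.rowsRes_eq (h : IsAtomicDecomp Y c f φ) (Ω : Finset (Fin N)) :
    rowsRes Ω Y = ∑ k, vecMulVec (atomRes N Ω (f k)) ((c k : ℂ) • φ k) := by
  ext m l
  simp [rowsRes, h.2.2.2, Matrix.sum_apply, vecMulVec_apply, atomRes, mul_assoc, mul_left_comm]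

theorem IsAtomicDecomp.fiberSum_eq (h₀ : IsAtomicDecomp Y0 c f φ) (h : IsAtomicDecomp Y c' f' φ')
    (hK' : K' ≤ K) (hΩ : rowsRes Ω Y = rowsRes Ω Y0)
    (hK : 2 * K + 1 < spark N Ω + (rowsRes Ω Y0).rank) :
    fiberSum f (fun k => (c k : ℂ) • φ k) = fiberSum f' (fun k => (c' k : ℂ) • φ' k) := by
  have hT : ∀ k, f k ∈ univ.image f ∪ univ.image f' := fun _ => by simp
  have hT' : ∀ k, f' k ∈ univ.image f ∪ univ.image f' := fun _ => by simp
  rw [h₀.rowsRes_eq, ← sum_vecMulVec_fiberSum hT] at hK hΩ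
  rw [h.rowsRes_eq, ← sum_vecMulVec_fiberSum hT'] at hΩ
  refine eq_of_sum_vecMulVec_eq (fun t ht => fiberSum_eq_zero (by simpa using ht))
    (fun t ht => fiberSum_eq_zero (by simpa using ht))
    (fun S hS hdep => spark_le (fun t ht => ?_) hdep) hΩ.symm ?_
  · rcases mem_union.1 (hS ht) with ht | ht <;> obtain ⟨k, -, rfl⟩ := mem_image.1 ht
    exacts [h₀.2.1 k, h.2.1 k]
  · have : #(univ.image f) ≤ K := card_image_le.trans_eq (card_fin K)
    have : #(univ.image f') ≤ K' := card_image_le.trans_eq (card_fin K')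
    omega

theorem IsAtomicDecomp.eq_of_rowsRes_eq (h₀ : IsAtomicDecomp Y0 c f φ)
    (h : IsAtomicDecomp Y c' f' φ') (hK' : K' ≤ K) (hΩ : rowsRes Ω Y = rowsRes Ω Y0)
    (hK : 2 * K + 1 < spark N Ω + (rowsRes Ω Y0).rank) : Y = Y0 := by
  have hT : ∀ k, f k ∈ univ.image f ∪ univ.image f' := fun _ => by simp
  have hT' : ∀ k, f' k ∈ univ.image f ∪ univ.image f' := fun _ => by simp
  rw [h.eq_sum, h₀.eq_sum, ← sum_vecMulVec_fiberSum hT, ← sum_vecMulVec_fiberSum hT',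
    h₀.fiberSum_eq h hK' hΩ hK]

theorem IsAtomicDecomp.smul_ne_zero (h : IsAtomicDecomp Y c f φ) (k : Fin K) :
    (c k : ℂ) • φ k ≠ 0 := by
  refine _root_.smul_ne_zero (by exact_mod_cast (h.1 k).ne') fun hφ => ?_
  simpa [hφ] using h.2.2.1 k

theorem IsAtomicDecomp.exists_injective_comp_eq (h₀ : IsAtomicDecomp Y0 c f φ)
    (hf : Function.Injective f) (h : IsAtomicDecomp Y0 c' f' φ') (hK' : K' ≤ K)
    (hK : 2 * K + 1 < spark N Ω + (rowsRes Ω Y0).rank) :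
    ∃ g : Fin K → Fin K', Function.Injective g ∧ f' ∘ g = f := by
  have hfib := h₀.fiberSum_eq h hK' rfl hK
  have : ∀ k, ∃ j, f' j = f k := fun k => by
    by_contra! hk
    apply h₀.smul_ne_zero k
    rw [← fiberSum_apply_of_injective hf (fun k => (c k : ℂ) • φ k) k, hfib, fiberSum_eq_zero]
    rintro ⟨j, hj⟩
    exact hk j hj
  choose g hg using this
  exact ⟨g, fun a b hab => hf (by rw [← hg a, ← hg b, hab]), funext hg⟩

theorem IsAtomicDecomp.card_le (h₀ : IsAtomicDecomp Y0 c f φ) (hf : Function.Injective f)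
    (h : IsAtomicDecomp Y0 c' f' φ') (hK' : K' ≤ K)
    (hK : 2 * K + 1 < spark N Ω + (rowsRes Ω Y0).rank) : K ≤ K' := by
  obtain ⟨g, hg, -⟩ := h₀.exists_injective_comp_eq hf h hK' hK
  simpa using Fintype.card_le_of_injective g hg

theorem eq_of_ofReal_smul_eq {ι : Type*} [Fintype ι] {r r' : ℝ} {ψ ψ' : ι → ℂ} (hr : 0 < r)
    (hr' : 0 < r') (hψ : ∑ i, normSq (ψ i) = 1) (hψ' : ∑ i, normSq (ψ' i) = 1)
    (h : (r : ℂ) • ψ = (r' : ℂ) • ψ') : r = r' ∧ ψ = ψ' := by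
  have hsum : ∀ (s : ℝ) (χ : ι → ℂ), ∑ i, normSq (((s : ℂ) • χ) i) = s * s * ∑ i, normSq (χ i) :=
    fun s χ => by simp [normSq_mul, mul_sum]
  have hrr : r = r' := by
    have := congr_arg (fun χ => ∑ i, normSq (χ i)) h
    simp only [hsum, hψ, hψ', mul_one] at this
    exact (mul_self_inj hr.le hr'.le).1 this
  subst hrr
  exact ⟨rfl, smul_right_injective _ (by exact_mod_cast hr.ne') h⟩

theorem IsAtomicDecomp.exists_perm {c' f' : Fin K → ℝ} {φ' : Fin K → Fin L → ℂ}
    (h₀ : IsAtomicDecomp Y0 c f φ) (hf : Function.Injective f) (h : IsAtomicDecomp Y0 c' f' φ')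
    (hK : 2 * K + 1 < spark N Ω + (rowsRes Ω Y0).rank) :
    ∃ σ : Equiv.Perm (Fin K), ∀ k, f' (σ k) = f k ∧ c' (σ k) = c k ∧ φ' (σ k) = φ k := by
  obtain ⟨g, hg, hfg⟩ := h₀.exists_injective_comp_eq hf h le_rfl hK
  set σ := Equiv.ofBijective g (Finite.injective_iff_bijective.1 hg)
  have hf' : Function.Injective f' := by
    have : f' = f ∘ σ.symm := by
      ext j
      rw [← hfg, Function.comp_apply, Function.comp_apply]
      exact congr_arg f' (σ.apply_symm_apply j).symm
    rw [this]
    exact hf.comp σ.symm.injective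
  refine ⟨σ, fun k => ?_⟩
  have hk := congr_fun (h₀.fiberSum_eq h le_rfl rfl hK) (f k)
  rw [fiberSum_apply_of_injective hf, ← congr_fun hfg k, Function.comp_apply,
    fiberSum_apply_of_injective hf'] at hk
  obtain ⟨hc, hφ⟩ := eq_of_ofReal_smul_eq (h.1 _) (h₀.1 k) (h.2.2.1 _) (h₀.2.2.1 k) hk.symm
  exact ⟨congr_fun hfg k, hc, hφ⟩

end Recovery

/-- if `2K < spark(A¹_Ω) − 1 + rank(Y⁰_Ω)` (stated as
`2K + 1 < spark + rank`), then `Y⁰` is the unique minimizer of the atomic `ℓ₀` norm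
subject to the data constraint, `‖Y⁰‖_{A,0} = K`, and the `K`-atom decomposition is
unique up to permutation. -/
theorem atomic_l0_exact_recovery (N L K : ℕ) (Ω : Finset (Fin N))
    (c : Fin K → ℝ) (f : Fin K → ℝ) (φ : Fin K → Fin L → ℂ)
    (hc : ∀ k, 0 < c k) (hf : ∀ k, f k ∈ Set.Ico (0 : ℝ) 1)
    (hfdist : Function.Injective f)
    (hφ : ∀ k, ∑ l, Complex.normSq (φ k l) = 1)
    (Y0 : Matrix (Fin N) (Fin L) ℂ)
    (hY0 : ∀ j l, Y0 j l = ∑ k, (c k : ℂ) * atom N (f k) j * φ k l)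
    (hK : 2 * K + 1 < spark N Ω + (rowsRes Ω Y0).rank) :
    (∀ Y : Matrix (Fin N) (Fin L) ℂ,
        (∀ m ∈ Ω, ∀ l, Y m l = Y0 m l) → Y ≠ Y0 → AL0 N L Y0 < AL0 N L Y) ∧
    AL0 N L Y0 = K ∧
    (∀ (c' : Fin K → ℝ) (f' : Fin K → ℝ) (φ' : Fin K → Fin L → ℂ),
      (∀ k, 0 < c' k) → (∀ k, f' k ∈ Set.Ico (0 : ℝ) 1) →
      (∀ k, ∑ l, Complex.normSq (φ' k l) = 1) →
      (∀ j l, Y0 j l = ∑ k, (c' k : ℂ) * atom N (f' k) j * φ' k l) →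
      ∃ σ : Equiv.Perm (Fin K), ∀ k, f' (σ k) = f k ∧ c' (σ k) = c k ∧ φ' (σ k) = φ k) := by
  have h₀ : IsAtomicDecomp Y0 c f φ := ⟨hc, hf, hφ, hY0⟩
  have hAL0 : AL0 N L Y0 = K := by
    obtain ⟨c', f', φ', h⟩ := exists_isAtomicDecomp_AL0 Y0
    exact le_antisymm (AL0_le h₀) (h₀.card_le hfdist h (AL0_le h₀) hK)
  refine ⟨fun Y hΩ hne => ?_, hAL0, fun c' f' φ' hc' hf' hφ' hY0' =>
    h₀.exists_perm hfdist ⟨hc', hf', hφ', hY0'⟩ hK⟩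
  by_contra! hle
  obtain ⟨c', f', φ', h⟩ := exists_isAtomicDecomp_AL0 Y
  refine hne (h₀.eq_of_rowsRes_eq h (hle.trans hAL0.le) ?_ hK)
  ext m l
  exact hΩ m m.2 l
end

section
/- In the single measurement vector case (L = 1), if a signal y⁰ = Σ_{k=1}^K c_k a(f_k) with distinct f_k has sparsity K < spark(A¹_Ω)/2, then y⁰ is the unique minimizer of the atomic ℓ₀ norm subject to agreeing with y⁰ on the samples indexed by Ω. -/
open Complex Matrix Finset

/-- Atomic `ℓ₀` norm of a vector `y ∈ ℂ^N` (the SMV case): the smallest number of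
atoms `a(f)` with nonzero complex coefficients (positive magnitudes times unit
phases) summing to `y`. -/
noncomputable def AL0v (N : ℕ) (y : Fin N → ℂ) : ℕ :=
  sInf {K | ∃ (c : Fin K → ℂ) (f : Fin K → ℝ),
    (∀ k, c k ≠ 0) ∧ (∀ k, f k ∈ Set.Ico (0 : ℝ) 1) ∧
    y = ∑ k, c k • atom N (f k)}

lemma atom_eq_pow (N : ℕ) (f : ℝ) (j : Fin N) :
    atom N f j = Complex.exp (2 * Real.pi * Complex.I * (f : ℂ)) ^ (j : ℕ) := by
  rw [atom, ← Complex.exp_nat_mul]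
  ring_nf

lemma exp_two_pi_inj {a b : ℝ} (ha : a ∈ Set.Ico (0:ℝ) 1) (hb : b ∈ Set.Ico (0:ℝ) 1)
    (h : Complex.exp (2 * Real.pi * Complex.I * (a:ℂ)) = Complex.exp (2 * Real.pi * Complex.I * (b:ℂ))) :
    a = b := by
  rw [Complex.exp_eq_exp_iff_exists_int] at h
  obtain ⟨n, hn⟩ := h
  have hne : (2 * Real.pi * Complex.I : ℂ) ≠ 0 := by
    simp [Real.pi_ne_zero, Complex.I_ne_zero]
  have h2 : (2 * Real.pi * Complex.I : ℂ) * a = (2 * Real.pi * Complex.I) * ((b:ℂ) + n) := by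
    rw [hn]; ring
  have h3 : (a : ℂ) = (b : ℂ) + (n : ℂ) := mul_left_cancel₀ hne h2
  have h4 : a = b + (n : ℝ) := by exact_mod_cast h3
  have hn0 : n = 0 := by
    have h5 : (n : ℝ) = a - b := by linarith
    have g1 : (-1 : ℝ) < (n:ℝ) := by rw [h5]; cases ha; cases hb; linarith
    have g2 : (n : ℝ) < 1 := by rw [h5]; cases ha; cases hb; linarith
    have g1' : (-1 : ℤ) < n := by exact_mod_cast g1
    have g2' : n < 1 := by exact_mod_cast g2
    omega
  rw [hn0] at h4; simpa using h4

lemma rep_nonempty (N : ℕ) (y : Fin N → ℂ) :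
    {K | ∃ (c : Fin K → ℂ) (f : Fin K → ℝ),
      (∀ k, c k ≠ 0) ∧ (∀ k, f k ∈ Set.Ico (0 : ℝ) 1) ∧
      y = ∑ k, c k • atom N (f k)}.Nonempty := by
  rcases Nat.eq_zero_or_pos N with hN | hN
  · subst hN
    exact ⟨0, Fin.elim0, Fin.elim0, fun k => k.elim0, fun k => k.elim0,
      funext fun m => m.elim0⟩
  · set fr : Fin N → ℝ := fun k => (k : ℝ) / N with hfr_def
    have hfr : ∀ k, fr k ∈ Set.Ico (0:ℝ) 1 := by
      intro k
      constructor
      · positivity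
      · rw [div_lt_one (by exact_mod_cast hN)]
        exact_mod_cast k.isLt
    set v : Fin N → ℂ := fun k => Complex.exp (2 * Real.pi * Complex.I * ((fr k : ℝ) : ℂ)) with hv_def
    have hvinj : Function.Injective v := by
      intro a b hab
      have := exp_two_pi_inj (hfr a) (hfr b) hab
      have hN' : (N:ℝ) ≠ 0 := Nat.cast_ne_zero.mpr hN.ne'
      rw [hfr_def, div_eq_div_iff hN' hN', mul_left_inj' hN'] at this
      exact Fin.ext (by exact_mod_cast this)
    set M : Matrix (Fin N) (Fin N) ℂ := (Matrix.vandermonde v)ᵀ with hM_def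
    have hdet : IsUnit M.det := by
      rw [hM_def, Matrix.det_transpose, Matrix.det_vandermonde]
      apply isUnit_iff_ne_zero.mpr
      rw [Finset.prod_ne_zero_iff]
      intro i _
      rw [Finset.prod_ne_zero_iff]
      intro j hj
      rw [Finset.mem_Ioi] at hj
      exact sub_ne_zero_of_ne (fun h => absurd (hvinj h) hj.ne')
    set cc : Fin N → ℂ := M⁻¹ *ᵥ y with hcc_def
    have hMc : M *ᵥ cc = y := by
      rw [hcc_def, Matrix.mulVec_mulVec, Matrix.mul_nonsing_inv _ hdet, Matrix.one_mulVec]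
    have hy : y = ∑ k, cc k • atom N (fr k) := by
      funext j
      rw [← hMc]
      simp only [Matrix.mulVec, dotProduct, Finset.sum_apply, Pi.smul_apply,
        smul_eq_mul, hM_def, Matrix.transpose_apply, Matrix.vandermonde_apply]
      apply Finset.sum_congr rfl
      intro k _
      rw [atom_eq_pow]
      ring
    -- pick t avoiding bad values
    obtain ⟨t, ht⟩ := Infinite.exists_notMem_finset
      (insert (0:ℂ) (Finset.image (fun k => -cc k) Finset.univ))
    have ht0 : t ≠ 0 := fun h => ht (by rw [h]; exact Finset.mem_insert_self _ _)
    have htc : ∀ k, cc k + t ≠ 0 := by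
      intro k h
      apply ht
      apply Finset.mem_insert_of_mem
      rw [Finset.mem_image]
      exact ⟨k, Finset.mem_univ _, by linear_combination -h⟩
    refine ⟨N + N, Fin.append (fun i => cc i + t) (fun _ => -t), Fin.append fr fr, ?_, ?_, ?_⟩
    · intro k
      refine Fin.addCases (fun i => ?_) (fun i => ?_) k
      · rw [Fin.append_left]; exact htc i
      · rw [Fin.append_right]; exact neg_ne_zero.mpr ht0
    · intro k
      refine Fin.addCases (fun i => ?_) (fun i => ?_) k
      · rw [Fin.append_left]; exact hfr i
      · rw [Fin.append_right]; exact hfr i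
    · rw [Fin.sum_univ_add]
      simp only [Fin.append_left, Fin.append_right, add_smul, neg_smul]
      rw [Finset.sum_add_distrib, Finset.sum_neg_distrib]
      rw [hy]
      abel

lemma collect {K : ℕ} (N : ℕ) (c : Fin K → ℂ) (f : Fin K → ℝ) (S : Finset ℝ)
    (hS : ∀ k, f k ∈ S) :
    ∑ s ∈ S, (∑ k ∈ Finset.univ.filter (fun k => f k = s), c k) • atom N s
      = ∑ k, c k • atom N (f k) := by
  rw [← Finset.sum_fiberwise_of_maps_to (g := f) (fun k _ => hS k)
      (fun k => c k • atom N (f k))]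
  apply Finset.sum_congr rfl
  intro s _
  rw [Finset.sum_smul]
  apply Finset.sum_congr rfl
  intro k hk
  rw [(Finset.mem_filter.mp hk).2]


/-- in the SMV case, if `K < spark(A¹_Ω)/2` then `y⁰` is the unique
atomic `ℓ₀` norm minimizer subject to agreeing with `y⁰` on `Ω`. -/
theorem atomic_l0_exact_recovery_smv (N K : ℕ) (Ω : Finset (Fin N))
    (c : Fin K → ℂ) (f : Fin K → ℝ) (hc : ∀ k, c k ≠ 0)
    (hf : ∀ k, f k ∈ Set.Ico (0 : ℝ) 1) (hfdist : Function.Injective f)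
    (y0 : Fin N → ℂ) (hy0 : y0 = ∑ k, c k • atom N (f k))
    (hK : 2 * K < spark N Ω) :
    ∀ y : Fin N → ℂ, (∀ m ∈ Ω, y m = y0 m) → y ≠ y0 → AL0v N y0 < AL0v N y := by
  intro y hyΩ hyne
  by_contra hlt
  push_neg at hlt
  have hy0K : AL0v N y0 ≤ K := Nat.sInf_le ⟨c, f, hc, hf, hy0⟩
  obtain ⟨K', hK'eq, d, g, hd, hg, hyrep⟩ :
      ∃ K', K' = AL0v N y ∧ ∃ (d : Fin K' → ℂ) (g : Fin K' → ℝ),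
        (∀ l, d l ≠ 0) ∧ (∀ l, g l ∈ Set.Ico (0:ℝ) 1) ∧ y = ∑ l, d l • atom N (g l) := by
    have hmem := Nat.sInf_mem (rep_nonempty N y)
    obtain ⟨d, g, hd, hg, hrep⟩ := hmem
    exact ⟨_, rfl, d, g, hd, hg, hrep⟩
  have hK'K : K' ≤ K := le_trans (hK'eq ▸ hlt) hy0K
  set S : Finset ℝ := (Finset.image f Finset.univ) ∪ (Finset.image g Finset.univ) with hS_def
  have hfS : ∀ k, f k ∈ S := fun k =>
    Finset.mem_union_left _ (Finset.mem_image_of_mem f (Finset.mem_univ k))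
  have hgS : ∀ l, g l ∈ S := fun l =>
    Finset.mem_union_right _ (Finset.mem_image_of_mem g (Finset.mem_univ l))
  set h : ℝ → ℂ := fun s =>
    (∑ k ∈ Finset.univ.filter (fun k => f k = s), c k)
      - (∑ l ∈ Finset.univ.filter (fun l => g l = s), d l) with hh_def
  have key : ∑ s ∈ S, h s • atom N s = y0 - y := by
    simp only [hh_def, sub_smul]
    rw [Finset.sum_sub_distrib, collect N c f S hfS, collect N d g S hgS, hy0, hyrep]
  have hcard : S.card ≤ 2 * K := by
    calc S.card ≤ (Finset.image f Finset.univ).card + (Finset.image g Finset.univ).card :=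
          Finset.card_union_le _ _
      _ ≤ K + K' := by
          apply add_le_add <;>
            exact le_trans (Finset.card_image_le) (by simp)
      _ ≤ 2 * K := by omega
  by_cases hzero : ∀ s ∈ S, h s = 0
  · apply hyne
    have : y0 - y = 0 := by
      rw [← key]
      exact Finset.sum_eq_zero (fun s hs => by rw [hzero s hs, zero_smul])
    funext m
    have := congrFun this m
    simp only [Pi.sub_apply, Pi.zero_apply, sub_eq_zero] at this
    exact this.symm
  · push_neg at hzero
    obtain ⟨s0, hs0S, hs0⟩ := hzero
    have hnotli : ¬ LinearIndependent ℂ (fun s : S => atomRes N Ω (s : ℝ)) := by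
      rw [Fintype.not_linearIndependent_iff]
      refine ⟨fun s => h (s : ℝ), ?_, ⟨s0, hs0S⟩, hs0⟩
      funext m
      simp only [Finset.sum_apply, Pi.smul_apply, Pi.zero_apply, atomRes]
      rw [Finset.sum_coe_sort S (fun s => h s • atom N s (m : Fin N))]
      have hk := congrFun key (m : Fin N)
      simp only [Finset.sum_apply, Pi.sub_apply, Pi.smul_apply] at hk
      rw [hk, hyΩ m.1 m.2, sub_self]
    have hspark : spark N Ω ≤ S.card := by
      apply Nat.sInf_le
      refine ⟨S, rfl, ?_, hnotli⟩
      intro s hs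
      rw [Finset.mem_coe, hS_def, Finset.mem_union] at hs
      rcases hs with hs | hs <;> obtain ⟨k, _, rfl⟩ := Finset.mem_image.mp hs
      · exact hf k
      · exact hg k
    omega
end

section
/- If Y = Σ_{k=1}^K c_k a(f_k)φ_k with c_k ≥ 0 and unit-norm φ_k, then there exist W and u (with T(u) a suitably scaled multiple of Σ_k c_k a(f_k)a(f_k)ᴴ) such that U = [[W,Yᴴ],[Y,T(u)]] ⪰ 0 and (1/(2√N))tr(U) ≤ Σ_k c_k; hence the SDP optimal value is at most ‖Y‖_A. -/
open Complex Matrix Finset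
open scoped ComplexOrder

/-- The Hermitian Toeplitz matrix `T(u)` with first row `uᵀ`. -/
noncomputable def Toep (N : ℕ) (u : Fin N → ℂ) : Matrix (Fin N) (Fin N) ℂ :=
  fun j k =>
    if _h : (j : ℕ) ≤ (k : ℕ) then
      u ⟨(k : ℕ) - (j : ℕ), Nat.lt_of_le_of_lt (Nat.sub_le _ _) k.isLt⟩
    else
      (starRingEnd ℂ) (u ⟨(j : ℕ) - (k : ℕ), Nat.lt_of_le_of_lt (Nat.sub_le _ _) j.isLt⟩)

/-- The block matrix `U = [[W, Yᴴ],[Y, T(u)]]`. -/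
noncomputable def blockU (N L : ℕ) (W : Matrix (Fin L) (Fin L) ℂ)
    (Y : Matrix (Fin N) (Fin L) ℂ) (u : Fin N → ℂ) :
    Matrix (Fin L ⊕ Fin N) (Fin L ⊕ Fin N) ℂ :=
  Matrix.fromBlocks W Yᴴ Y (Toep N u)

/-- The atomic norm `‖Y‖_A`: the infimum of `Σ c_k` over atomic decompositions
`Y = Σ c_k a(f_k)φ_k` with `c_k ≥ 0`, `f_k ∈ [0,1)`, `‖φ_k‖₂ = 1`. -/
noncomputable def ANorm (N L : ℕ) (Y : Matrix (Fin N) (Fin L) ℂ) : ℝ :=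
  sInf {t | ∃ (K : ℕ) (c : Fin K → ℝ) (f : Fin K → ℝ) (φ : Fin K → Fin L → ℂ),
    (∀ k, 0 ≤ c k) ∧ (∀ k, f k ∈ Set.Ico (0 : ℝ) 1) ∧
    (∀ k, ∑ l, Complex.normSq (φ k l) = 1) ∧
    (∀ j l, Y j l = ∑ k, (c k : ℂ) * atom N (f k) j * φ k l) ∧
    t = ∑ k, c k}

lemma trace_re_nonneg' {n : Type*} [Fintype n] [DecidableEq n]
    {M : Matrix n n ℂ} (h : M.PosSemidef) :
    0 ≤ (M.trace).re := by
  have hd : ∀ p, 0 ≤ (M p p).re := by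
    intro p
    have := h.diag_nonneg (i := p)
    exact (Complex.le_def.mp this).1
  simp only [Matrix.trace, Matrix.diag, Complex.re_sum]
  exact Finset.sum_nonneg fun p _ => hd p

lemma key (N L K : ℕ) (Y : Matrix (Fin N) (Fin L) ℂ)
    (c : Fin K → ℝ) (f : Fin K → ℝ) (φ : Fin K → Fin L → ℂ)
    (hc : ∀ k, 0 ≤ c k)
    (hφ : ∀ k, ∑ l, Complex.normSq (φ k l) = 1)
    (hY : ∀ j l, Y j l = ∑ k, (c k : ℂ) * atom N (f k) j * φ k l) :
    ∃ (W : Matrix (Fin L) (Fin L) ℂ) (u : Fin N → ℂ),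
      (blockU N L W Y u).PosSemidef ∧
      (1 / (2 * Real.sqrt N)) * ((blockU N L W Y u).trace).re ≤ ∑ k, c k := by
  set s : ℝ := Real.sqrt N with hs
  have hs0 : 0 ≤ s := Real.sqrt_nonneg _
  set W : Matrix (Fin L) (Fin L) ℂ :=
    fun l l' => ∑ k, ((c k * s : ℝ) : ℂ) * star (φ k l) * φ k l' with hW
  set u : Fin N → ℂ :=
    fun m => ((s : ℂ))⁻¹ * ∑ k, (c k : ℂ) *
      Complex.exp (-(2 * Real.pi * Complex.I * ((m : ℕ) : ℂ) * (f k : ℂ))) with hu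
  set B : Matrix (Fin K) (Fin L ⊕ Fin N) ℂ :=
    fun k p => ((Real.sqrt (c k * s) : ℝ) : ℂ) *
      Sum.elim (fun l => φ k l) (fun j : Fin N => star (atom N (f k) j) / (s : ℂ)) p with hB
  have hsq : ∀ k, ((Real.sqrt (c k * s) : ℝ) : ℂ) * ((Real.sqrt (c k * s) : ℝ) : ℂ)
      = ((c k * s : ℝ) : ℂ) := by
    intro k
    rw [← Complex.ofReal_mul, Real.mul_self_sqrt (mul_nonneg (hc k) hs0)]
  have hNpos : ∀ _ : Fin N, (0:ℝ) < N := fun j => by exact_mod_cast j.pos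
  have hsne : ∀ _ : Fin N, (s : ℂ) ≠ 0 := by
    intro j
    simpa [hs] using Complex.ofReal_ne_zero.mpr (ne_of_gt (Real.sqrt_pos.mpr (hNpos j)))
  have hstar_atom : ∀ k (j : Fin N), star (atom N (f k) j)
      = Complex.exp (-(2 * Real.pi * Complex.I * ((j : ℕ) : ℂ) * (f k : ℂ))) := by
    intro k j
    rw [atom, Complex.star_def, ← Complex.exp_conj]
    congr 1
    simp only [_root_.map_mul, Complex.conj_ofReal, Complex.conj_I, map_ofNat,
      Complex.conj_natCast]
    ring
  have hUeq : blockU N L W Y u = Bᴴ * B := by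
    ext p q
    have hentry : (Bᴴ * B) p q = ∑ k, ((c k * s : ℝ) : ℂ) *
        (Sum.elim (fun l => star (φ k l)) (fun j : Fin N => atom N (f k) j / (s : ℂ)) p) *
        (Sum.elim (fun l => φ k l) (fun j : Fin N => star (atom N (f k) j) / (s : ℂ)) q) := by
      simp only [Matrix.mul_apply, Matrix.conjTranspose_apply]; simp only [hB]
      refine Finset.sum_congr rfl fun k _ => ?_
      rcases p with l | j <;> rcases q with l' | j' <;>
        simp [div_eq_mul_inv, mul_comm, mul_assoc, mul_left_comm, ← hsq k]
    rw [hentry]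
    rcases p with l | j
    · rcases q with l' | j'
      · simp [blockU, Matrix.fromBlocks, hW]
      · have hbl : (blockU N L W Y u) (Sum.inl l) (Sum.inr j') = star (Y j' l) := by
          simp [blockU, Matrix.fromBlocks, Matrix.conjTranspose_apply]
        rw [hbl, hY j' l, star_sum]
        refine Finset.sum_congr rfl fun k _ => ?_
        simp only [Sum.elim_inl, Sum.elim_inr, star_mul', Complex.ofReal_mul]
        rw [Complex.star_def, Complex.conj_ofReal]
        field_simp [hsne j']
    · rcases q with l' | j'
      · have hbl : (blockU N L W Y u) (Sum.inr j) (Sum.inl l') = Y j l' := by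
          simp [blockU, Matrix.fromBlocks]
        rw [hbl, hY j l']
        refine Finset.sum_congr rfl fun k _ => ?_
        simp only [Sum.elim_inl, Sum.elim_inr, Complex.ofReal_mul]
        field_simp [hsne j]
      · have hbl : (blockU N L W Y u) (Sum.inr j) (Sum.inr j') = Toep N u j j' := by
          simp [blockU, Matrix.fromBlocks]
        rw [hbl]
        rcases le_or_gt (j : ℕ) (j' : ℕ) with hle | hlt
        · rw [Toep]
          simp only [hle, dif_pos]
          rw [hu]
          beta_reduce
          rw [Finset.mul_sum]
          refine Finset.sum_congr rfl fun k _ => ?_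
          simp only [Sum.elim_inr]
          rw [hstar_atom k j']
          have hcast : (((j' : ℕ) - (j : ℕ) : ℕ) : ℂ) = ((j' : ℕ) : ℂ) - ((j : ℕ) : ℂ) := by
            push_cast [Nat.cast_sub hle]; ring
          have hexp : Complex.exp (-(2 * Real.pi * Complex.I *
              ((((j' : ℕ) - (j : ℕ) : ℕ)) : ℂ) * (f k : ℂ)))
              = Complex.exp (2 * Real.pi * Complex.I * ((j : ℕ) : ℂ) * (f k : ℂ)) *
                Complex.exp (-(2 * Real.pi * Complex.I * ((j' : ℕ) : ℂ) * (f k : ℂ))) := by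
            rw [← Complex.exp_add]
            congr 1
            rw [hcast]
            ring
          rw [hexp, atom, Complex.ofReal_mul]
          field_simp [hsne j]
        · rw [Toep]
          have hnle : ¬ ((j : ℕ) ≤ (j' : ℕ)) := not_le.mpr hlt
          rw [dif_neg hnle, hu]
          beta_reduce
          simp only [_root_.map_mul, map_inv₀, map_sum, Complex.conj_ofReal]
          rw [Finset.mul_sum]
          refine Finset.sum_congr rfl fun k _ => ?_
          rw [← Complex.exp_conj]
          simp only [Sum.elim_inr]
          rw [hstar_atom k j']
          have hle' : (j' : ℕ) ≤ (j : ℕ) := le_of_lt hlt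
          have hcast : (((j : ℕ) - (j' : ℕ) : ℕ) : ℂ) = ((j : ℕ) : ℂ) - ((j' : ℕ) : ℂ) := by
            push_cast [Nat.cast_sub hle']; ring
          have hconj : (starRingEnd ℂ) (-(2 * Real.pi * Complex.I *
              (((j : ℕ) - (j' : ℕ) : ℕ) : ℂ) * (f k : ℂ)))
              = 2 * Real.pi * Complex.I * (((j : ℕ) - (j' : ℕ) : ℕ) : ℂ) * (f k : ℂ) := by
            simp only [_root_.map_mul, Complex.conj_ofReal, Complex.conj_I, map_ofNat,
              Complex.conj_natCast, map_neg]
            ring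
          have hexp : Complex.exp (2 * Real.pi * Complex.I *
              ((((j : ℕ) - (j' : ℕ) : ℕ)) : ℂ) * (f k : ℂ))
              = Complex.exp (2 * Real.pi * Complex.I * ((j : ℕ) : ℂ) * (f k : ℂ)) *
                Complex.exp (-(2 * Real.pi * Complex.I * ((j' : ℕ) : ℂ) * (f k : ℂ))) := by
            rw [← Complex.exp_add]
            congr 1
            rw [hcast]
            ring
          rw [hconj, hexp, atom, Complex.ofReal_mul]
          field_simp [hsne j]
  have hPSD : (blockU N L W Y u).PosSemidef := by
    rw [hUeq]; exact Matrix.posSemidef_conjTranspose_mul_self B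
  refine ⟨W, u, hPSD, ?_⟩
  rcases Nat.eq_zero_or_pos N with hN | hN
  · have hz : s = 0 := by rw [hs, hN]; simp
    rw [hz]
    simp only [mul_zero, div_zero, zero_mul]
    exact Finset.sum_nonneg fun k _ => hc k
  · have hNR : (0:ℝ) < (N:ℝ) := by exact_mod_cast hN
    have hspos : 0 < s := Real.sqrt_pos.mpr hNR
    have hsC : (s : ℂ) ≠ 0 := Complex.ofReal_ne_zero.mpr (ne_of_gt hspos)
    have hss : s * s = (N : ℝ) := Real.mul_self_sqrt (le_of_lt hNR)
    have hWdiag : ∑ l, W l l = ((s * ∑ k, c k : ℝ) : ℂ) := by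
      rw [Finset.sum_comm]
      have : ∀ k, ∑ l, ((c k * s : ℝ) : ℂ) * star (φ k l) * φ k l = ((c k * s : ℝ) : ℂ) := by
        intro k
        calc ∑ l, ((c k * s : ℝ) : ℂ) * star (φ k l) * φ k l
            = ((c k * s : ℝ) : ℂ) * ∑ l, ((Complex.normSq (φ k l) : ℝ) : ℂ) := by
              rw [Finset.mul_sum]
              refine Finset.sum_congr rfl fun l _ => ?_
              rw [Complex.normSq_eq_conj_mul_self, Complex.star_def]
              ring
          _ = ((c k * s : ℝ) : ℂ) := by
              rw [← Complex.ofReal_sum, hφ k, Complex.ofReal_one, mul_one]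
      rw [Finset.sum_congr rfl fun k _ => this k]
      push_cast
      rw [Finset.mul_sum]
      refine Finset.sum_congr rfl fun k _ => ?_
      ring
    have hTdiag : ∀ j : Fin N, Toep N u j j = ((s : ℂ))⁻¹ * ((∑ k, c k : ℝ) : ℂ) := by
      intro j
      rw [Toep, dif_pos (le_refl _)]
      have h0 : ((⟨(j:ℕ) - (j:ℕ), Nat.lt_of_le_of_lt (Nat.sub_le _ _) j.isLt⟩ : Fin N) : ℕ) = 0 :=
        Nat.sub_self _
      rw [hu]
      beta_reduce
      rw [h0]
      push_cast
      simp only [mul_zero, zero_mul, neg_zero, Complex.exp_zero, mul_one]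
    have htr : (blockU N L W Y u).trace
        = ((s * ∑ k, c k : ℝ) : ℂ) + (N : ℂ) * (((s : ℂ))⁻¹ * ((∑ k, c k : ℝ) : ℂ)) := by
      have h1 : (blockU N L W Y u).trace = ∑ l, W l l + ∑ j : Fin N, Toep N u j j := by
        simp [Matrix.trace, Matrix.diag, blockU, Matrix.fromBlocks, Fintype.sum_sum_type]
      rw [h1, hWdiag, Finset.sum_congr rfl fun j _ => hTdiag j]
      simp [Finset.sum_const]
    have hre : ((blockU N L W Y u).trace).re = 2 * s * ∑ k, c k := by
      rw [htr]
      have hssC : ((N : ℕ) : ℂ) = (s : ℂ) * (s : ℂ) := by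
        rw [← Complex.ofReal_mul, hss]
        norm_cast
      have : (N : ℂ) * (((s : ℂ))⁻¹ * ((∑ k, c k : ℝ) : ℂ)) = ((s * ∑ k, c k : ℝ) : ℂ) := by
        rw [hssC]
        push_cast
        field_simp
      rw [this, ← Complex.ofReal_add, Complex.ofReal_re]
      ring
    rw [hre]
    have h2s : (2 * s) ≠ 0 := by positivity
    exact le_of_eq (by field_simp)


/-- from any atomic decomposition `Y = Σ c_k a(f_k)φ_k` one obtains a
feasible PSD `U = [[W,Yᴴ],[Y,T(u)]]` with `(1/(2√N)) tr(U) ≤ Σ c_k`; hence the SDP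
optimal value is at most `‖Y‖_A`. -/
theorem SDP_le_ANorm (N L K : ℕ) (Y : Matrix (Fin N) (Fin L) ℂ)
    (c : Fin K → ℝ) (f : Fin K → ℝ) (φ : Fin K → Fin L → ℂ)
    (hc : ∀ k, 0 ≤ c k) (hf : ∀ k, f k ∈ Set.Ico (0 : ℝ) 1)
    (hφ : ∀ k, ∑ l, Complex.normSq (φ k l) = 1)
    (hY : ∀ j l, Y j l = ∑ k, (c k : ℂ) * atom N (f k) j * φ k l) :
    (∃ (W : Matrix (Fin L) (Fin L) ℂ) (u : Fin N → ℂ),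
      (blockU N L W Y u).PosSemidef ∧
      (1 / (2 * Real.sqrt N)) * ((blockU N L W Y u).trace).re ≤ ∑ k, c k) ∧
    sInf {v | ∃ (W : Matrix (Fin L) (Fin L) ℂ) (u : Fin N → ℂ),
      (blockU N L W Y u).PosSemidef ∧
      v = (1 / (2 * Real.sqrt N)) * ((blockU N L W Y u).trace).re} ≤ ANorm N L Y := by
  refine ⟨key N L K Y c f φ hc hφ hY, ?_⟩
  have hbdd : BddBelow {v | ∃ (W : Matrix (Fin L) (Fin L) ℂ) (u : Fin N → ℂ),
      (blockU N L W Y u).PosSemidef ∧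
      v = (1 / (2 * Real.sqrt N)) * ((blockU N L W Y u).trace).re} := by
    refine ⟨0, fun v hv => ?_⟩
    obtain ⟨W, u, hpsd, rfl⟩ := hv
    have h1 : (0:ℝ) ≤ 1 / (2 * Real.sqrt N) :=
      div_nonneg zero_le_one (by positivity)
    exact mul_nonneg h1 (trace_re_nonneg' hpsd)
  refine le_csInf ⟨∑ k, c k, K, c, f, φ, hc, hf, hφ, hY, rfl⟩ ?_
  rintro t ⟨K', c', f', φ', hc', hf', hφ', hY', rfl⟩
  obtain ⟨W, u, hpsd, hle⟩ := key N L K' Y c' f' φ' hc' hφ' hY'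
  exact le_trans (csInf_le hbdd ⟨W, u, hpsd, rfl⟩) hle
end

section
/- If the differences {m₁ − m₂ : m₁, m₂ ∈ Ω, m₁ ≥ m₂} are coprime (gcd = 1), then any two atoms a_Ω(f₁), a_Ω(f₂) with f₁ ≠ f₂ in [0,1) are linearly independent; hence spark(A¹_Ω) ≥ 3. -/
open Complex Matrix Finset
open scoped ComplexOrder

/-- The set of pairwise differences `{m₁ − m₂ : m₁, m₂ ∈ Ω, m₁ ≥ m₂}`. -/
def diffs {N : ℕ} (Ω : Finset (Fin N)) : Finset ℕ :=
  (Ω ×ˢ Ω).filter (fun p => (p.2 : ℕ) ≤ (p.1 : ℕ)) |>.image (fun p => (p.1 : ℕ) - (p.2 : ℕ))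

/-!
Writing `w = e^{2πif}`, the atom `a_Ω(f)` is the vector `(w^m)_{m ∈ Ω}`. If `c • a_Ω(f₁) = a_Ω(f₂)`,
comparing the entries at `m' ≤ m` gives `(w₁ / w₂)^(m - m') = 1`, so the order of `w₁ / w₂`
divides every difference and hence their gcd `1`; thus `w₁ = w₂`, and `f₁ = f₂` because
`f ↦ e^{2πif}` is injective on `[0, 1)`. One or two distinct atoms are therefore independent,
while any `N + 1` atoms in `ℂ^Ω` are dependent.
-/

open Real

theorem pow_finset_gcd_eq_one {M : Type*} [Monoid M] {x : M} {s : Finset ℕ}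
    (h : ∀ d ∈ s, x ^ d = 1) : x ^ s.gcd id = 1 :=
  orderOf_dvd_iff_pow_eq_one.1 <| Finset.dvd_gcd fun d hd => orderOf_dvd_of_pow_eq_one (h d hd)

section

variable {N : ℕ} {Ω : Finset (Fin N)}

theorem nonempty_of_gcd_diffs_eq_one (hΩ : (diffs Ω).gcd id = 1) : Ω.Nonempty := by
  rw [Finset.nonempty_iff_ne_empty]
  rintro rfl
  simp [_root_.diffs] at hΩ

theorem eq_of_smul_pow_eq_pow {K : Type*} [CommGroupWithZero K] (hΩ : (diffs Ω).gcd id = 1)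
    {u v c : K} (hv : v ≠ 0) (h : ∀ m ∈ Ω, c * u ^ (m : ℕ) = v ^ (m : ℕ)) : u = v := by
  have hdiffs : ∀ d ∈ diffs Ω, (u / v) ^ d = 1 := by
    simp only [_root_.diffs, Finset.mem_image, Finset.mem_filter, Finset.mem_product]
    rintro _ ⟨⟨m, m'⟩, ⟨⟨hm, hm'⟩, hle⟩, rfl⟩
    have hc : c * u ^ (m' : ℕ) ≠ 0 := by rw [h m' hm']; exact pow_ne_zero _ hv
    rw [div_pow, div_eq_one_iff_eq (pow_ne_zero _ hv)]
    apply mul_right_cancel₀ hc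
    calc u ^ ((m : ℕ) - m') * (c * u ^ (m' : ℕ))
        = c * (u ^ ((m : ℕ) - m') * u ^ (m' : ℕ)) := mul_left_comm _ _ _
      _ = v ^ (m : ℕ) := by rw [pow_sub_mul_pow u hle, h m hm]
      _ = v ^ ((m : ℕ) - m') * (c * u ^ (m' : ℕ)) := by rw [h m' hm', pow_sub_mul_pow v hle]
  simpa [hΩ, div_eq_one_iff_eq hv] using pow_finset_gcd_eq_one hdiffs

theorem exp_two_pi_mul_I_injOn_Ico :
    Set.InjOn (fun f : ℝ => cexp (2 * π * I * f)) (Set.Ico 0 1) := by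
  intro f₁ ⟨h₁, h₁'⟩ f₂ ⟨h₂, h₂'⟩ heq
  have hπ := pi_pos
  have hcircle : Circle.exp (2 * π * f₁) = Circle.exp (2 * π * f₂) := by
    ext
    simp only [Circle.coe_exp]
    push_cast
    ring_nf at heq ⊢
    exact heq
  have := Circle.exp_injOn_Ico (a := 0) (b := 2 * π) (by simp)
    ⟨by positivity, by nlinarith⟩ ⟨by positivity, by nlinarith⟩ hcircle
  exact mul_left_cancel₀ (by positivity) this

theorem atomRes_eq_pow (f : ℝ) : atomRes N Ω f = fun m : Ω => cexp (2 * π * I * f) ^ (m : ℕ) := by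
  funext m
  rw [atomRes, atom, ← Complex.exp_nat_mul]
  ring_nf

theorem atomRes_ne_zero (hΩ : Ω.Nonempty) (f : ℝ) : atomRes N Ω f ≠ 0 := by
  obtain ⟨m, hm⟩ := hΩ
  exact fun h => exp_ne_zero _ (congrFun h ⟨m, hm⟩)

theorem smul_atomRes_ne (hΩ : (diffs Ω).gcd id = 1) {f₁ f₂ : ℝ} (h₁ : f₁ ∈ Set.Ico (0 : ℝ) 1)
    (h₂ : f₂ ∈ Set.Ico (0 : ℝ) 1) (hne : f₁ ≠ f₂) (c : ℂ) :
    c • atomRes N Ω f₁ ≠ atomRes N Ω f₂ := by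
  intro hc
  refine hne (exp_two_pi_mul_I_injOn_Ico h₁ h₂ (eq_of_smul_pow_eq_pow hΩ (c := c) (exp_ne_zero _)
    fun m hm => ?_))
  simpa [atomRes_eq_pow] using congrFun hc ⟨m, hm⟩

theorem linearIndepOn_atomRes_of_card_le_two (hΩ : (diffs Ω).gcd id = 1) {S : Finset ℝ}
    (hS : S.card ≤ 2) (hSI : (S : Set ℝ) ⊆ Set.Ico 0 1) : LinearIndepOn ℂ (atomRes N Ω) S := by
  have hne := atomRes_ne_zero (nonempty_of_gcd_diffs_eq_one hΩ)
  interval_cases hk : S.card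
  · simp [card_eq_zero.1 hk]
  · obtain ⟨a, rfl⟩ := card_eq_one.1 hk
    simpa using hne a
  · obtain ⟨a, b, hab, rfl⟩ := card_eq_two.1 hk
    rw [coe_pair, linearIndepOn_pair_iff _ hab (hne a)]
    exact smul_atomRes_ne hΩ (hSI (by simp)) (hSI (by simp)) hab

theorem exists_card_eq_not_linearIndependent_atomRes (N : ℕ) (Ω : Finset (Fin N)) :
    ∃ S : Finset ℝ, S.card = N + 1 ∧ (S : Set ℝ) ⊆ Set.Ico 0 1 ∧
      ¬ LinearIndependent ℂ (fun f : S => atomRes N Ω f) := by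
  obtain ⟨S, hS, hcard⟩ := (Set.Ico_infinite (zero_lt_one' ℝ)).exists_subset_card_eq (N + 1)
  refine ⟨S, hcard, hS, fun hli => ?_⟩
  have hle := hli.fintype_card_le_finrank
  simp only [Fintype.card_coe, Module.finrank_fintype_fun_eq_card] at hle
  have := Ω.card_le_univ.trans_eq (Fintype.card_fin N)
  omega

end

/-- if the pairwise differences of `Ω` are coprime, then any two atoms
with distinct frequencies in `[0,1)` are linearly independent; hence `spark ≥ 3`. -/
theorem spark_ge_three_of_coprime (N : ℕ) (Ω : Finset (Fin N))
    (h : (diffs Ω).gcd id = 1) :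
    (∀ f₁ ∈ Set.Ico (0 : ℝ) 1, ∀ f₂ ∈ Set.Ico (0 : ℝ) 1, f₁ ≠ f₂ →
      LinearIndependent ℂ ![atomRes N Ω f₁, atomRes N Ω f₂]) ∧
    3 ≤ spark N Ω := by
  refine ⟨fun f₁ h₁ f₂ h₂ hne => (LinearIndependent.pair_iff'
    (atomRes_ne_zero (nonempty_of_gcd_diffs_eq_one h) f₁)).2 (smul_atomRes_ne h h₁ h₂ hne), ?_⟩
  -- `sInf ∅ = 0`, so some dependent family of atoms has to be exhibited.
  obtain ⟨S, hcard, hS, hdep⟩ := exists_card_eq_not_linearIndependent_atomRes N Ω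
  refine le_csInf ⟨_, S, hcard, hS, hdep⟩ ?_
  rintro k ⟨S, rfl, hS, hdep⟩
  by_contra! hk
  exact hdep (linearIndepOn_atomRes_of_card_le_two h (by omega) hS)
end
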